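/- As m → ∞, A(F_m + F_{m−2}) is asymptotic to (13/48)·2^m; that is, lim_{m→∞} A(F_m + F_{m−2})/2^m = 13/48. Consequently lim_{m→∞} A(F_m + F_{m−2})/(F_m + F_{m−2})^λ = 13/24. -/

import Mathlib

open scoped BigOperators
open Filter Topology

/-- A natural number is a Fibonacci number, i.e. equals `F m` for some `m ≥ 1`
(with `F 1 = F 2 = 1`). -/
def IsFibNum (x : ℕ) : Prop := ∃ m : ℕ, 0 < m ∧ Nat.fib m = x

/-- `R n` counts the partitions of `n` into distinct Fibonacci numbers:
the number of finite sets of Fibonacci numbers with sum `n` (so `R 0 = 1`). -/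
noncomputable def R (n : ℕ) : ℕ :=
  Nat.card {S : Finset ℕ // (∀ x ∈ S, IsFibNum x) ∧ (∑ x ∈ S, x) = n}

/-- The summatory function `A H = ∑_{n=0}^{H} R n`. -/
noncomputable def A (H : ℕ) : ℕ := ∑ n ∈ Finset.range (H + 1), R n

/-!
Let `N(k, B)` count the subsets of `{F₂, …, F_k}` with sum at most `B`. For `H < F_{k+1}` only
these Fibonacci numbers can occur in a partition of `n ≤ H`, so `A H = N(k, H)`. Splitting off
the largest element gives `N(k+1, B) = N(k, B) + N(k, B - F_{k+1})` for `B ≥ F_{k+1}`, and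
complementation inside `{F₂, …, F_k}`, whose sum is `F_{k+2} - 2`, gives
`N(k, B) + N(k, F_{k+2} - 3 - B) = 2^{k-1}`. Combining these, `g k = A(F_{k+4} + F_{k+2})`
satisfies `g (k+2) = g k + 13·2^k + 2`, so `g k = (13/3)·2^k + O(k)`. Finally
`F_m + F_{m-2} = φ^{m-1} + ψ^{m-1}` and `φ^λ = 2`, so `(F_m + F_{m-2})^λ ~ 2^{m-1}`.
-/

open Finset

def subsetSumCount (s : Finset ℕ) (B : ℕ) : ℕ := #{T ∈ s.powerset | ∑ x ∈ T, x ≤ B}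

section SubsetSumCount

variable {s : Finset ℕ} {a B : ℕ}

lemma subsetSumCount_zero (hs : ∀ x ∈ s, 0 < x) : subsetSumCount s 0 = 1 := by
  rw [subsetSumCount, card_eq_one]
  refine ⟨∅, eq_singleton_iff_unique_mem.mpr ⟨by simp, fun T hT => ?_⟩⟩
  simp only [mem_filter, mem_powerset, nonpos_iff_eq_zero, sum_eq_zero_iff] at hT
  exact eq_empty_of_forall_notMem fun x hx => (hs x (hT.1 hx)).ne' (hT.2 x hx)

lemma subsetSumCount_insert (ha : a ∉ s) :
    subsetSumCount (insert a s) B =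
      subsetSumCount s B + #{T ∈ s.powerset | a + ∑ x ∈ T, x ≤ B} := by
  simp only [subsetSumCount, card_filter]
  rw [sum_powerset_insert ha]
  congr 1
  refine sum_congr rfl fun T hT => ?_
  rw [sum_insert fun h => ha (mem_powerset.mp hT h)]

lemma subsetSumCount_insert_of_le (ha : a ∉ s) (haB : a ≤ B) :
    subsetSumCount (insert a s) B = subsetSumCount s B + subsetSumCount s (B - a) := by
  rw [subsetSumCount_insert ha, subsetSumCount]
  congr 2
  exact filter_congr fun T _ => by omega

lemma subsetSumCount_insert_of_lt (ha : a ∉ s) (hBa : B < a) :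
    subsetSumCount (insert a s) B = subsetSumCount s B := by
  rw [subsetSumCount_insert ha, add_eq_left, card_eq_zero, filter_eq_empty_iff]
  omega

/-- Complementation `T ↦ s \ T` exchanges the subsets of sum `≤ B` with those of sum `> B`. -/
lemma subsetSumCount_add_subsetSumCount_sub (hB : B < ∑ x ∈ s, x) :
    subsetSumCount s B + subsetSumCount s (∑ x ∈ s, x - B - 1) = 2 ^ #s := by
  rw [← card_powerset, ← card_filter_add_card_filter_not (fun T => ∑ x ∈ T, x ≤ B),
    subsetSumCount, subsetSumCount]
  congr 1
  have hcompl : ∀ T ⊆ s, ∑ x ∈ s \ T, x + ∑ x ∈ T, x = ∑ x ∈ s, x :=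
    fun T hT => sum_sdiff hT
  refine card_nbij' (s \ ·) (s \ ·) ?_ ?_ ?_ ?_ <;> intro T hT <;>
    simp only [coe_filter, mem_powerset, Set.mem_ofPred_eq] at hT ⊢
  · have := hcompl T hT.1
    exact ⟨sdiff_subset, by omega⟩
  · have := hcompl T hT.1
    exact ⟨sdiff_subset, by omega⟩
  · exact Finset.sdiff_sdiff_eq_self hT.1
  · exact Finset.sdiff_sdiff_eq_self hT.1

end SubsetSumCount

/-- Indices start at 2 because `F₁ = F₂`. -/
def fibFinset (k : ℕ) : Finset ℕ := (Icc 2 k).image Nat.fib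

section FibFinset

variable {j k B x : ℕ}

lemma mem_fibFinset : x ∈ fibFinset k ↔ ∃ j, 2 ≤ j ∧ j ≤ k ∧ Nat.fib j = x := by
  simp [fibFinset, and_assoc]

lemma pos_of_mem_fibFinset (hx : x ∈ fibFinset k) : 0 < x := by
  obtain ⟨j, hj, -, rfl⟩ := mem_fibFinset.mp hx
  exact Nat.fib_pos.mpr (by omega)

lemma fib_succ_notMem_fibFinset (k : ℕ) : Nat.fib (k + 1) ∉ fibFinset k := by
  rw [mem_fibFinset]
  rintro ⟨j, hj, hjk, hfib⟩
  obtain ⟨i, rfl⟩ := Nat.exists_eq_add_of_le' hj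
  have := Nat.fib_add_two_strictMono (show i < k - 1 by omega)
  simp only [show k - 1 + 2 = k + 1 by omega] at this
  omega

lemma fibFinset_succ (hk : 1 ≤ k) :
    fibFinset (k + 1) = insert (Nat.fib (k + 1)) (fibFinset k) := by
  rw [fibFinset, ← insert_Icc_right_eq_Icc_add_one (by omega), image_insert, fibFinset]

lemma card_fibFinset (k : ℕ) : #(fibFinset k) = k - 1 := by
  rcases Nat.lt_or_ge k 1 with hk | hk
  · interval_cases k; rfl
  induction k, hk using Nat.le_induction with
  | base => rfl
  | succ k hk ih =>
    rw [fibFinset_succ hk, card_insert_of_notMem (fib_succ_notMem_fibFinset k), ih]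
    omega

lemma sum_fibFinset (hk : 1 ≤ k) : ∑ x ∈ fibFinset k, x + 2 = Nat.fib (k + 2) := by
  induction k, hk using Nat.le_induction with
  | base => rfl
  | succ k hk ih =>
    have h : Nat.fib (k + 1 + 2) = Nat.fib (k + 1) + Nat.fib (k + 2) := Nat.fib_add_two
    rw [fibFinset_succ hk, sum_insert (fib_succ_notMem_fibFinset k)]
    omega

lemma subsetSumCount_fibFinset_zero (k : ℕ) : subsetSumCount (fibFinset k) 0 = 1 :=
  subsetSumCount_zero fun _ => pos_of_mem_fibFinset

lemma subsetSumCount_fibFinset_succ_of_le (hk : 1 ≤ k) (hB : Nat.fib (k + 1) ≤ B) :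
    subsetSumCount (fibFinset (k + 1)) B =
      subsetSumCount (fibFinset k) B + subsetSumCount (fibFinset k) (B - Nat.fib (k + 1)) := by
  rw [fibFinset_succ hk, subsetSumCount_insert_of_le (fib_succ_notMem_fibFinset k) hB]

lemma subsetSumCount_fibFinset_succ_of_lt (hk : 1 ≤ k) (hB : B < Nat.fib (k + 1)) :
    subsetSumCount (fibFinset (k + 1)) B = subsetSumCount (fibFinset k) B := by
  rw [fibFinset_succ hk, subsetSumCount_insert_of_lt (fib_succ_notMem_fibFinset k) hB]

lemma subsetSumCount_fibFinset_of_le (hj : 1 ≤ j) (hjk : j ≤ k) (hB : B < Nat.fib (j + 1)) :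
    subsetSumCount (fibFinset k) B = subsetSumCount (fibFinset j) B := by
  induction k, hjk using Nat.le_induction with
  | base => rfl
  | succ k hjk ih =>
    rw [subsetSumCount_fibFinset_succ_of_lt (hj.trans hjk)
      (hB.trans_le (Nat.fib_mono (by omega))), ih]

lemma subsetSumCount_fibFinset_add_compl (hk : 1 ≤ k) (hB : B + 3 ≤ Nat.fib (k + 2)) :
    subsetSumCount (fibFinset k) B + subsetSumCount (fibFinset k) (Nat.fib (k + 2) - 3 - B) =
      2 ^ (k - 1) := by
  have hsum := sum_fibFinset hk
  rw [← card_fibFinset, ← subsetSumCount_add_subsetSumCount_sub (B := B) (by omega)]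
  congr 2
  omega

end FibFinset

section PartitionCount

variable {k n H x : ℕ}

lemma isFibNum_iff_mem_fibFinset (hx : x < Nat.fib (k + 1)) :
    IsFibNum x ↔ x ∈ fibFinset k := by
  constructor
  · rintro ⟨m, hm, rfl⟩
    have hfib : Nat.fib (max m 2) = Nat.fib m := by
      rcases (show m = 1 ∨ 2 ≤ m by omega) with rfl | h
      · rfl
      · rw [max_eq_left h]
    refine mem_fibFinset.mpr ⟨max m 2, le_max_right _ _, not_lt.mp fun h => ?_, hfib⟩
    have := Nat.fib_mono (show k + 1 ≤ max m 2 by omega)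
    omega
  · intro hx
    obtain ⟨j, hj, -, rfl⟩ := mem_fibFinset.mp hx
    exact ⟨j, by omega, rfl⟩

lemma R_eq_card (hn : n < Nat.fib (k + 1)) :
    R n = #{T ∈ (fibFinset k).powerset | ∑ x ∈ T, x = n} := by
  have hiff (T : Finset ℕ) :
      ((∀ x ∈ T, IsFibNum x) ∧ ∑ x ∈ T, x = n) ↔
        T ∈ {T ∈ (fibFinset k).powerset | ∑ x ∈ T, x = n} := by
    rw [mem_filter, mem_powerset]
    refine and_congr_left fun hT => forall₂_congr fun x hx => isFibNum_iff_mem_fibFinset ?_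
    exact ((single_le_sum (fun _ _ => Nat.zero_le _) hx).trans_eq hT).trans_lt hn
  rw [R, Nat.card_congr (Equiv.subtypeEquivRight hiff), Nat.card_eq_finsetCard]

lemma A_eq_subsetSumCount (hH : H < Nat.fib (k + 1)) :
    A H = subsetSumCount (fibFinset k) H := by
  rw [subsetSumCount, A, card_eq_sum_card_fiberwise (f := fun T => ∑ x ∈ T, x)
    (t := range (H + 1)) fun T hT => mem_range.mpr (Nat.lt_succ_of_le (mem_filter.mp hT).2)]
  refine sum_congr rfl fun n hn => ?_
  have hnH := mem_range.mp hn
  rw [R_eq_card (k := k) (by omega), filter_filter]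
  exact congrArg card (filter_congr fun T _ => by dsimp only; omega)

end PartitionCount

section Recurrence

variable {k B : ℕ}

lemma three_le_fib_succ (hk : 3 ≤ k) : 3 ≤ Nat.fib (k + 1) :=
  Nat.fib_mono (by omega : 4 ≤ k + 1)

lemma subsetSumCount_fibFinset_succ_add_compl (hk : 1 ≤ k) (hB : B + 3 ≤ Nat.fib (k + 1)) :
    subsetSumCount (fibFinset (k + 1)) (Nat.fib (k + 2) + B) +
      subsetSumCount (fibFinset k) (Nat.fib (k + 1) - 3 - B) = 2 ^ k := by
  have hfib : Nat.fib (k + 3) = Nat.fib (k + 1) + Nat.fib (k + 2) := Nat.fib_add_two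
  have h : subsetSumCount (fibFinset (k + 1)) (Nat.fib (k + 2) + B) +
      subsetSumCount (fibFinset (k + 1)) (Nat.fib (k + 3) - 3 - (Nat.fib (k + 2) + B)) = 2 ^ k :=
    subsetSumCount_fibFinset_add_compl (by omega)
      (show Nat.fib (k + 2) + B + 3 ≤ Nat.fib (k + 3) by omega)
  rwa [show Nat.fib (k + 3) - 3 - (Nat.fib (k + 2) + B) = Nat.fib (k + 1) - 3 - B by omega,
    subsetSumCount_fibFinset_succ_of_lt hk
      (show Nat.fib (k + 1) - 3 - B < Nat.fib (k + 1) by omega)] at h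

lemma subsetSumCount_fibFinset_fib_sub_three_add_two (hk : 3 ≤ k) :
    subsetSumCount (fibFinset (k + 2)) (Nat.fib (k + 3) - 3) + 1 =
      2 ^ k + subsetSumCount (fibFinset k) (Nat.fib (k + 1) - 3) := by
  have h3 := three_le_fib_succ hk
  have hfib : Nat.fib (k + 3) = Nat.fib (k + 1) + Nat.fib (k + 2) := Nat.fib_add_two
  have hsplit : subsetSumCount (fibFinset (k + 2)) (Nat.fib (k + 3) - 3) =
      subsetSumCount (fibFinset (k + 1)) (Nat.fib (k + 3) - 3) +
        subsetSumCount (fibFinset (k + 1)) (Nat.fib (k + 3) - 3 - Nat.fib (k + 2)) :=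
    subsetSumCount_fibFinset_succ_of_le (by omega)
      (show Nat.fib (k + 2) ≤ Nat.fib (k + 3) - 3 by omega)
  rw [show Nat.fib (k + 3) - 3 - Nat.fib (k + 2) = Nat.fib (k + 1) - 3 by omega,
    subsetSumCount_fibFinset_succ_of_lt (by omega)
      (show Nat.fib (k + 1) - 3 < Nat.fib (k + 1) by omega)] at hsplit
  have hcompl := subsetSumCount_fibFinset_succ_add_compl (k := k) (B := Nat.fib (k + 1) - 3)
    (by omega) (by omega)
  rw [show Nat.fib (k + 2) + (Nat.fib (k + 1) - 3) = Nat.fib (k + 3) - 3 by omega, Nat.sub_self,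
    subsetSumCount_fibFinset_zero] at hcompl
  omega

lemma A_fib_add_fib_add_two_mul_subsetSumCount (hk : 3 ≤ k) :
    A (Nat.fib (k + 4) + Nat.fib (k + 2)) +
      2 * subsetSumCount (fibFinset k) (Nat.fib (k + 1) - 3) = 5 * 2 ^ k + 1 := by
  have h3 := three_le_fib_succ hk
  have hfib3 : Nat.fib (k + 3) = Nat.fib (k + 1) + Nat.fib (k + 2) := Nat.fib_add_two
  have hfib4 : Nat.fib (k + 4) = Nat.fib (k + 2) + Nat.fib (k + 3) := Nat.fib_add_two
  have hfib5 : Nat.fib (k + 5) = Nat.fib (k + 3) + Nat.fib (k + 4) := Nat.fib_add_two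
  rw [A_eq_subsetSumCount (show Nat.fib (k + 4) + Nat.fib (k + 2) < Nat.fib (k + 5) by omega)]
  have hsplit : subsetSumCount (fibFinset (k + 4)) (Nat.fib (k + 4) + Nat.fib (k + 2)) =
      subsetSumCount (fibFinset (k + 3)) (Nat.fib (k + 4) + Nat.fib (k + 2)) +
        subsetSumCount (fibFinset (k + 3)) (Nat.fib (k + 2)) := by
    have h : subsetSumCount (fibFinset (k + 4)) (Nat.fib (k + 4) + Nat.fib (k + 2)) =
        subsetSumCount (fibFinset (k + 3)) (Nat.fib (k + 4) + Nat.fib (k + 2)) +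
          subsetSumCount (fibFinset (k + 3))
            (Nat.fib (k + 4) + Nat.fib (k + 2) - Nat.fib (k + 4)) :=
      subsetSumCount_fibFinset_succ_of_le (by omega) (Nat.le_add_right _ _)
    rwa [Nat.add_sub_cancel_left] at h
  have hcompl₂ : subsetSumCount (fibFinset (k + 3)) (Nat.fib (k + 4) + Nat.fib (k + 2)) +
      subsetSumCount (fibFinset (k + 2)) (Nat.fib (k + 3) - 3 - Nat.fib (k + 2)) = 2 ^ (k + 2) :=
    subsetSumCount_fibFinset_succ_add_compl (by omega)
      (show Nat.fib (k + 2) + 3 ≤ Nat.fib (k + 3) by omega)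
  rw [show Nat.fib (k + 3) - 3 - Nat.fib (k + 2) = Nat.fib (k + 1) - 3 by omega,
    subsetSumCount_fibFinset_of_le (k := k + 2) (j := k) (by omega) (by omega)
      (show Nat.fib (k + 1) - 3 < Nat.fib (k + 1) by omega)] at hcompl₂
  have hdrop : subsetSumCount (fibFinset (k + 3)) (Nat.fib (k + 2)) =
      subsetSumCount (fibFinset (k + 1)) (Nat.fib (k + 2)) + 1 := by
    rw [subsetSumCount_fibFinset_succ_of_lt (by omega)
        (show Nat.fib (k + 2) < Nat.fib (k + 3) by omega),
      subsetSumCount_fibFinset_succ_of_le (by omega) le_rfl, Nat.sub_self,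
      subsetSumCount_fibFinset_zero]
  have hcompl₀ :=
    subsetSumCount_fibFinset_succ_add_compl (k := k) (B := 0) (by omega) (by omega)
  rw [add_zero, Nat.sub_zero] at hcompl₀
  have hpow : 2 ^ (k + 2) = 4 * 2 ^ k := by ring
  omega

lemma A_fib_add_six_add_fib_add_four (hk : 3 ≤ k) :
    A (Nat.fib (k + 6) + Nat.fib (k + 4)) =
      A (Nat.fib (k + 4) + Nat.fib (k + 2)) + 13 * 2 ^ k + 2 := by
  have h₀ := A_fib_add_fib_add_two_mul_subsetSumCount hk
  have h₂ : A (Nat.fib (k + 6) + Nat.fib (k + 4)) +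
      2 * subsetSumCount (fibFinset (k + 2)) (Nat.fib (k + 3) - 3) = 5 * 2 ^ (k + 2) + 1 :=
    A_fib_add_fib_add_two_mul_subsetSumCount (by omega)
  have hc := subsetSumCount_fibFinset_fib_sub_three_add_two hk
  have hpow : 2 ^ (k + 2) = 4 * 2 ^ k := by ring
  omega

end Recurrence

/-- The error `u n - a 2ⁿ / 3` grows by exactly `b` every two steps, hence only linearly. -/
lemma tendsto_div_two_pow_of_add_two_eq {u : ℕ → ℝ} {a b : ℝ}
    (h : ∀ n, u (n + 2) = u n + a * 2 ^ n + b) :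
    Tendsto (fun n => u n / 2 ^ n) atTop (𝓝 (a / 3)) := by
  set e : ℕ → ℝ := fun n => u n - a * 2 ^ n / 3 with he
  set C := |e 0| + |e 1|
  have hbound (n : ℕ) : |e n| ≤ C + |b| * n := by
    induction n using Nat.twoStepInduction with
    | zero => simp [C]
    | one => simp only [C, Nat.cast_one, mul_one]; linarith [abs_nonneg (e 0), abs_nonneg b]
    | more n ih _ =>
      have hstep : e (n + 2) = e n + b := by simp only [he, h n]; ring
      rw [hstep]
      push_cast
      linarith [abs_add_le (e n) b, abs_nonneg b]
  have herr : Tendsto (fun n => e n / 2 ^ n) atTop (𝓝 0) := by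
    have hlim : Tendsto (fun n : ℕ => C * (2 ^ n)⁻¹ + |b| * ((n : ℝ) ^ 1 / 2 ^ n))
        atTop (𝓝 0) := by
      simpa using
        ((tendsto_inv_atTop_zero.comp (tendsto_pow_atTop_atTop_of_one_lt one_lt_two)).const_mul
          C).add ((tendsto_pow_const_div_const_pow_of_one_lt 1 one_lt_two).const_mul |b|)
    refine squeeze_zero_norm (fun n => ?_) hlim
    rw [Real.norm_eq_abs, abs_div, abs_pow, abs_two]
    calc |e n| / 2 ^ n ≤ (C + |b| * n) / 2 ^ n := by gcongr; exact hbound n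
      _ = _ := by ring
  convert herr.const_add (a / 3) using 1
  · ext n
    simp only [he]
    field_simp
    ring
  · simp

lemma tendsto_A_fib_add_fib_sub_two_div_two_pow :
    Tendsto (fun m : ℕ => (A (Nat.fib m + Nat.fib (m - 2)) : ℝ) / 2 ^ m)
      atTop (𝓝 (13 / 48)) := by
  have hrec (n : ℕ) : (A (Nat.fib (n + 9) + Nat.fib (n + 7)) : ℝ) =
      A (Nat.fib (n + 7) + Nat.fib (n + 5)) + 104 * 2 ^ n + 2 := by
    rw [show A (Nat.fib (n + 9) + Nat.fib (n + 7)) = _ from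
      A_fib_add_six_add_fib_add_four (k := n + 3) (by omega)]
    push_cast
    ring
  have hlim := (tendsto_div_two_pow_of_add_two_eq
    (u := fun n => (A (Nat.fib (n + 7) + Nat.fib (n + 5)) : ℝ)) hrec).div_const 128
  rw [← tendsto_add_atTop_iff_nat 7]
  convert hlim using 2 with n
  · rw [show n + 7 - 2 = n + 5 by omega, pow_add, div_div]
    norm_num
  · norm_num

section GoldenRatio

open Real

lemma abs_goldenConj_div_goldenRatio_lt_one : |goldenConj / goldenRatio| < 1 := by
  rw [abs_div, div_lt_one (abs_pos.mpr goldenRatio_ne_zero), abs_of_neg goldenConj_neg,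
    abs_of_pos goldenRatio_pos]
  linarith [neg_one_lt_goldenConj, one_lt_goldenRatio]

lemma cast_fib_add_two_add_fib (n : ℕ) :
    ((Nat.fib (n + 2) + Nat.fib n : ℕ) : ℝ) = goldenRatio ^ (n + 1) + goldenConj ^ (n + 1) := by
  rw [Nat.fib_add_two]
  push_cast
  linear_combination goldenRatio_mul_fib_succ_add_fib n + goldenConj_mul_fib_succ_add_fib n -
    (Nat.fib (n + 1) : ℝ) * goldenRatio_add_goldenConj

lemma tendsto_fib_add_two_add_fib_div_goldenRatio_pow :
    Tendsto (fun n : ℕ => ((Nat.fib (n + 2) + Nat.fib n : ℕ) : ℝ) / goldenRatio ^ (n + 1))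
      atTop (𝓝 1) := by
  have heq (n : ℕ) : ((Nat.fib (n + 2) + Nat.fib n : ℕ) : ℝ) / goldenRatio ^ (n + 1) =
      1 + (goldenConj / goldenRatio) ^ (n + 1) := by
    rw [cast_fib_add_two_add_fib, add_div, div_self (pow_ne_zero _ goldenRatio_ne_zero),
      ← div_pow]
  simp_rw [heq]
  simpa using ((tendsto_pow_atTop_nhds_zero_of_abs_lt_one
    abs_goldenConj_div_goldenRatio_lt_one).comp (tendsto_add_atTop_nat 1)).const_add 1

lemma tendsto_fib_add_two_add_fib_rpow_div_two_pow :
    Tendsto (fun n : ℕ =>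
      ((Nat.fib (n + 2) + Nat.fib n : ℕ) : ℝ) ^ (log 2 / log goldenRatio) / 2 ^ (n + 1))
      atTop (𝓝 1) := by
  have hpow (n : ℕ) : (goldenRatio ^ (n + 1)) ^ (log 2 / log goldenRatio) = 2 ^ (n + 1) := by
    rw [← rpow_pow_comm goldenRatio_pos.le, ← logb,
      rpow_logb goldenRatio_pos one_lt_goldenRatio.ne' two_pos]
  have h := tendsto_fib_add_two_add_fib_div_goldenRatio_pow.rpow_const
    (p := log 2 / log goldenRatio) (Or.inl one_ne_zero)
  rw [one_rpow] at h
  refine h.congr fun n => ?_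
  rw [div_rpow (Nat.cast_nonneg _) (by positivity), hpow]

end GoldenRatio

/-- `A(F_m + F_{m-2}) ~ (13/48)·2^m`, and hence `A(F_m+F_{m-2})/(F_m+F_{m-2})^λ → 13/24`. -/
theorem summatory_fib_sum_asymptotic (φ lam : ℝ)
    (hφ : φ = (1 + Real.sqrt 5) / 2)
    (hlam : lam = Real.log 2 / Real.log φ) :
    Tendsto (fun m : ℕ => (A (Nat.fib m + Nat.fib (m - 2)) : ℝ) / 2 ^ m) atTop
      (𝓝 (13 / 48)) ∧
    Tendsto (fun m : ℕ =>
        (A (Nat.fib m + Nat.fib (m - 2)) : ℝ) /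
          ((Nat.fib m + Nat.fib (m - 2) : ℕ) : ℝ) ^ lam) atTop
      (𝓝 (13 / 24)) := by
  obtain rfl : φ = Real.goldenRatio := hφ
  subst hlam
  refine ⟨tendsto_A_fib_add_fib_sub_two_div_two_pow, ?_⟩
  have hlucas : Tendsto (fun m : ℕ => ((Nat.fib m + Nat.fib (m - 2) : ℕ) : ℝ) ^
      (Real.log 2 / Real.log Real.goldenRatio) / 2 ^ m) atTop (𝓝 (1 / 2)) := by
    rw [← tendsto_add_atTop_iff_nat 2]
    convert tendsto_fib_add_two_add_fib_rpow_div_two_pow.div_const 2 using 2 with n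
    rw [Nat.add_sub_cancel, pow_succ, div_div]
  convert tendsto_A_fib_add_fib_sub_two_div_two_pow.div hlucas one_half_pos.ne' using 2 with m
  · rw [Pi.div_apply, div_div_div_cancel_right₀ (pow_ne_zero m two_ne_zero)]
  · norm_num
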